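/- Zero belongs to the resolvent set of the extrapolated operator: the map 𝔸₋ : X^{1/2} × X^{1/2} × X^{1/2} → Y₋ defined by 𝔸₋(u,v,w) = (v, w, −α ι(w) − A₋(βv + γu + δw)) is bijective onto Y₋, and there exists a constant C > 0 such that its inverse satisfies ‖𝔸₋⁻¹(u,v,c)‖_{Y₋} ≤ C ‖(u,v,c)‖_{Y₋} for all (u,v,c) ∈ Y₋. -/

import Mathlib

open Filter Topology

noncomputable section

local notation "⟪" x ", " y "⟫" => @inner ℝ _ _ x y

variable {X : Type*} [NormedAddCommGroup X] [InnerProductSpace ℝ X] [CompleteSpace X]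

/-- Membership in the fractional power space `X^{1/2}` (here `2σ = 1`). -/
def memHalf (e : HilbertBasis ℕ ℝ X) (lam : ℕ → ℝ) (φ : X) : Prop :=
  Summable fun k => lam k * ⟪φ, e k⟫ ^ 2

/-- Membership in the fractional power space `X^1` (here `2σ = 2`). -/
def memOne (e : HilbertBasis ℕ ℝ X) (lam : ℕ → ℝ) (φ : X) : Prop :=
  Summable fun k => lam k ^ 2 * ⟪φ, e k⟫ ^ 2

/-- The squared `X^{1/2}`-norm: `‖φ‖²_{X^{1/2}} = ∑_k λ_k ⟨φ,e_k⟩²`. -/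
def nHalfSq (e : HilbertBasis ℕ ℝ X) (lam : ℕ → ℝ) (φ : X) : ℝ :=
  ∑' k, lam k * ⟪φ, e k⟫ ^ 2

/-- The squared `X^{-1/2}`-norm of an element of `X`: `∑_k λ_k⁻¹ ⟨φ,e_k⟩²`. -/
def nNegSq (e : HilbertBasis ℕ ℝ X) (lam : ℕ → ℝ) (φ : X) : ℝ :=
  ∑' k, (lam k)⁻¹ * ⟪φ, e k⟫ ^ 2

/-- The diagonal operator `A φ = ∑_k λ_k ⟨φ,e_k⟩ e_k`. -/
def Aop (e : HilbertBasis ℕ ℝ X) (lam : ℕ → ℝ) (φ : X) : X :=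
  ∑' k, (lam k * ⟪φ, e k⟫) • e k

/-- The inverse operator `A⁻¹ φ = ∑_k λ_k⁻¹ ⟨φ,e_k⟩ e_k`. -/
def Ainv (e : HilbertBasis ℕ ℝ X) (lam : ℕ → ℝ) (φ : X) : X :=
  ∑' k, ((lam k)⁻¹ * ⟪φ, e k⟫) • e k

/-- The norm of `Y = X^{1/2} × X^{1/2} × X`. -/
def Ynorm (e : HilbertBasis ℕ ℝ X) (lam : ℕ → ℝ) (u v w : X) : ℝ :=
  Real.sqrt (nHalfSq e lam u + nHalfSq e lam v + ‖w‖ ^ 2)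

/-- Membership in the extrapolated sequence space `X^{-1/2}`. -/
def memNegSeq (lam : ℕ → ℝ) (c : ℕ → ℝ) : Prop :=
  Summable fun k => (lam k)⁻¹ * c k ^ 2

/-- The squared `X^{-1/2}`-norm of a sequence. -/
def nNegSeqSq (lam : ℕ → ℝ) (c : ℕ → ℝ) : ℝ :=
  ∑' k, (lam k)⁻¹ * c k ^ 2

/-- The extrapolated operator `A₋ : X^{1/2} → X^{-1/2}`, `(A₋φ)_k = λ_k ⟨φ,e_k⟩`. -/
def Aminus (e : HilbertBasis ℕ ℝ X) (lam : ℕ → ℝ) (φ : X) : ℕ → ℝ :=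
  fun k => lam k * ⟪φ, e k⟫

/-- The embedding `ι : X → X^{-1/2}`, `ι(w) = (⟨w,e_k⟩)_k`. -/
def iotaX (e : HilbertBasis ℕ ℝ X) (w : X) : ℕ → ℝ :=
  fun k => ⟪w, e k⟫

/-!
Write `a, b, d` for the coefficients of `u, v, w` and `c` for the third component of `𝔸₋(u,v,w)`,
so that `c_k = -α d_k - λ_k (β b_k + γ a_k + δ d_k)`. Everything reduces to this coordinatewise
relation: it determines `a_k = -(c_k + α d_k + λ_k β b_k + λ_k δ d_k) / (γ λ_k)`, and the elementary
bound `(x + y + z + t)² ≤ 4 (x² + y² + z² + t²)`, applied with weight `λ_k⁻¹`, shows that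
`λ_k a_k²` is controlled by `λ_k⁻¹ c_k²`, `λ_k b_k²`, `λ_k d_k²` and `λ_k⁻¹ d_k² ≤ λ₀⁻² λ_k d_k²`.
Summing over `k` gives both the regularity of the preimage and the bound on `𝔸₋⁻¹`.
-/

lemma sq_add_four_le (x y z t : ℝ) :
    (x + y + z + t) ^ 2 ≤ 4 * (x ^ 2 + y ^ 2 + z ^ 2 + t ^ 2) := by
  nlinarith [sq_nonneg (x - y), sq_nonneg (x - z), sq_nonneg (x - t), sq_nonneg (y - z),
    sq_nonneg (y - t), sq_nonneg (z - t)]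

lemma inv_mul_sq_le_of_le {l₀ l : ℝ} (h₀ : 0 < l₀) (hl : l₀ ≤ l) (d : ℝ) :
    l⁻¹ * d ^ 2 ≤ (l₀ ^ 2)⁻¹ * (l * d ^ 2) := by
  have hl_pos : 0 < l := h₀.trans_le hl
  calc l⁻¹ * d ^ 2 = (l ^ 2)⁻¹ * (l * d ^ 2) := by field_simp
    _ ≤ (l₀ ^ 2)⁻¹ * (l * d ^ 2) := by gcongr

section Coordinates

variable {l α β γ δ a b d c : ℝ}

lemma inv_mul_sq_le_of_eq (hl : 0 < l) (hc : c = -α * d - l * (β * b + γ * a + δ * d)) :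
    l⁻¹ * c ^ 2 ≤
      4 * (α ^ 2 * (l⁻¹ * d ^ 2) + β ^ 2 * (l * b ^ 2) + γ ^ 2 * (l * a ^ 2) +
        δ ^ 2 * (l * d ^ 2)) :=
  calc l⁻¹ * c ^ 2 = l⁻¹ * (α * d + l * (β * b) + l * (γ * a) + l * (δ * d)) ^ 2 := by
        rw [hc]; ring
    _ ≤ l⁻¹ * (4 * ((α * d) ^ 2 + (l * (β * b)) ^ 2 + (l * (γ * a)) ^ 2 + (l * (δ * d)) ^ 2)) := by
        gcongr; exact sq_add_four_le _ _ _ _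
    _ = _ := by field_simp

lemma mul_sq_le_of_eq (hl : 0 < l) (hγ : γ ≠ 0)
    (hc : c = -α * d - l * (β * b + γ * a + δ * d)) :
    l * a ^ 2 ≤
      4 / γ ^ 2 * (l⁻¹ * c ^ 2 + α ^ 2 * (l⁻¹ * d ^ 2) + β ^ 2 * (l * b ^ 2) +
        δ ^ 2 * (l * d ^ 2)) :=
  calc l * a ^ 2 = (γ ^ 2 * l)⁻¹ * (c + α * d + l * (β * b) + l * (δ * d)) ^ 2 := by
        rw [hc]; field_simp; ring
    _ ≤ (γ ^ 2 * l)⁻¹ * (4 * (c ^ 2 + (α * d) ^ 2 + (l * (β * b)) ^ 2 + (l * (δ * d)) ^ 2)) := by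
        gcongr; exact sq_add_four_le _ _ _ _
    _ = _ := by field_simp

end Coordinates

namespace HilbertBasis

variable {E ι : Type*} [NormedAddCommGroup E] [InnerProductSpace ℝ E] (e : HilbertBasis ι ℝ E)

lemma ext_inner {u v : E} (h : ∀ i, ⟪u, e i⟫ = ⟪v, e i⟫) : u = v :=
  e.repr.injective <| lp.ext <| funext fun i => by
    simp only [e.repr_apply_apply, real_inner_comm, h]

lemma exists_inner_eq_of_summable_sq {a : ι → ℝ} (ha : Summable fun i => a i ^ 2) :
    ∃ u : E, ∀ i, ⟪u, e i⟫ = a i :=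
  ⟨e.repr.symm ⟨a, memℓp_gen (by simpa [Real.norm_eq_abs, sq_abs] using ha)⟩, fun i => by
    rw [real_inner_comm, ← e.repr_apply_apply, LinearIsometryEquiv.apply_symm_apply]⟩

end HilbertBasis

section Extrapolated

variable {E : Type*} [NormedAddCommGroup E] [InnerProductSpace ℝ E] (e : HilbertBasis ℕ ℝ E)
  {lam : ℕ → ℝ} {lam0 : ℝ}

lemma nHalfSq_nonneg (hlam : ∀ k, 0 ≤ lam k) (φ : E) : 0 ≤ nHalfSq e lam φ :=
  tsum_nonneg fun k => mul_nonneg (hlam k) (sq_nonneg _)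

lemma nNegSeqSq_nonneg (hlam : ∀ k, 0 ≤ lam k) (c : ℕ → ℝ) : 0 ≤ nNegSeqSq lam c :=
  tsum_nonneg fun k => mul_nonneg (inv_nonneg.2 (hlam k)) (sq_nonneg _)

lemma exists_memHalf_inner_eq (hlam0 : 0 < lam0) (hlam : ∀ k, lam0 ≤ lam k) {a : ℕ → ℝ}
    (ha : Summable fun k => lam k * a k ^ 2) :
    ∃ u : E, memHalf e lam u ∧ ∀ k, ⟪u, e k⟫ = a k := by
  have ha2 : Summable fun k => a k ^ 2 :=
    (ha.mul_left lam0⁻¹).of_nonneg_of_le (fun k => sq_nonneg _) fun k => by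
      rw [le_inv_mul_iff₀ hlam0]; gcongr; exact hlam k
  obtain ⟨u, hu⟩ := e.exists_inner_eq_of_summable_sq ha2
  exact ⟨u, by simpa only [memHalf, hu] using ha, hu⟩

variable {e}

lemma memHalf.memNegSeq_iotaX (hlam0 : 0 < lam0) (hlam : ∀ k, lam0 ≤ lam k) {w : E}
    (hw : memHalf e lam w) : memNegSeq lam (iotaX e w) :=
  (hw.mul_left _).of_nonneg_of_le
    (fun k => mul_nonneg (inv_nonneg.2 (hlam0.le.trans (hlam k))) (sq_nonneg _))
    fun k => inv_mul_sq_le_of_le hlam0 (hlam k) _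

lemma nNegSeqSq_iotaX_le (hlam0 : 0 < lam0) (hlam : ∀ k, lam0 ≤ lam k) {w : E}
    (hw : memHalf e lam w) : nNegSeqSq lam (iotaX e w) ≤ (lam0 ^ 2)⁻¹ * nHalfSq e lam w :=
  hasSum_le (fun k => inv_mul_sq_le_of_le hlam0 (hlam k) _)
    (hw.memNegSeq_iotaX hlam0 hlam).hasSum (hw.hasSum.mul_left _)

variable {α β γ δ : ℝ}

variable (e lam α β γ δ) in
/-- The third component of `𝔸₋(u, v, w)`. -/
def mgtThird (u v w : E) : ℕ → ℝ :=
  (-α) • iotaX e w - Aminus e lam (β • v + γ • u + δ • w)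

lemma mgtThird_apply (u v w : E) (k : ℕ) :
    mgtThird e lam α β γ δ u v w k =
      -α * ⟪w, e k⟫ - lam k * (β * ⟪v, e k⟫ + γ * ⟪u, e k⟫ + δ * ⟪w, e k⟫) := by
  simp only [mgtThird, iotaX, Aminus, Pi.sub_apply, Pi.smul_apply, smul_eq_mul, inner_add_left,
    real_inner_smul_left]

lemma mgtThird_left_injective (hlam : ∀ k, lam k ≠ 0) (hγ : γ ≠ 0) (v w : E) :
    Function.Injective fun u => mgtThird e lam α β γ δ u v w := fun u₁ u₂ h =>
  e.ext_inner fun k => by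
    have hk := congrFun h k
    simp only [mgtThird_apply] at hk
    exact mul_left_cancel₀ (mul_ne_zero (hlam k) hγ) (by linear_combination -hk)

lemma memNegSeq_mgtThird (hlam0 : 0 < lam0) (hlam : ∀ k, lam0 ≤ lam k) {u v w : E}
    (hu : memHalf e lam u) (hv : memHalf e lam v) (hw : memHalf e lam w) :
    memNegSeq lam (mgtThird e lam α β γ δ u v w) :=
  (((((hw.memNegSeq_iotaX hlam0 hlam).mul_left (α ^ 2)).add (hv.mul_left (β ^ 2))).add
      (hu.mul_left (γ ^ 2))).add (hw.mul_left (δ ^ 2))).mul_left 4 |>.of_nonneg_of_le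
    (fun k => mul_nonneg (inv_nonneg.2 (hlam0.le.trans (hlam k))) (sq_nonneg _))
    fun k => inv_mul_sq_le_of_eq (hlam0.trans_le (hlam k)) (mgtThird_apply u v w k)

lemma nHalfSq_le_of_mgtThird (hlam0 : 0 < lam0) (hlam : ∀ k, lam0 ≤ lam k) (hγ : γ ≠ 0)
    {u v w : E} (hu : memHalf e lam u) (hv : memHalf e lam v) (hw : memHalf e lam w) :
    nHalfSq e lam u ≤
      4 / γ ^ 2 * (nNegSeqSq lam (mgtThird e lam α β γ δ u v w) +
        α ^ 2 * nNegSeqSq lam (iotaX e w) + β ^ 2 * nHalfSq e lam v + δ ^ 2 * nHalfSq e lam w) :=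
  hasSum_le
    (fun k => mul_sq_le_of_eq (hlam0.trans_le (hlam k)) hγ (mgtThird_apply u v w k))
    hu.hasSum
    (((((memNegSeq_mgtThird hlam0 hlam hu hv hw).hasSum.add
      ((hw.memNegSeq_iotaX hlam0 hlam).hasSum.mul_left (α ^ 2))).add
        (hv.hasSum.mul_left (β ^ 2))).add (hw.hasSum.mul_left (δ ^ 2))).mul_left (4 / γ ^ 2))

lemma exists_memHalf_mgtThird_eq (hlam0 : 0 < lam0) (hlam : ∀ k, lam0 ≤ lam k) (hγ : γ ≠ 0)
    {v w : E} {c : ℕ → ℝ} (hv : memHalf e lam v) (hw : memHalf e lam w) (hc : memNegSeq lam c) :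
    ∃ u, memHalf e lam u ∧ mgtThird e lam α β γ δ u v w = c := by
  have hl : ∀ k, 0 < lam k := fun k => hlam0.trans_le (hlam k)
  set a : ℕ → ℝ :=
    fun k => -(c k + α * ⟪w, e k⟫ + lam k * (β * ⟪v, e k⟫ + δ * ⟪w, e k⟫)) / (γ * lam k)
  have hca : ∀ k, c k = -α * ⟪w, e k⟫ - lam k * (β * ⟪v, e k⟫ + γ * a k + δ * ⟪w, e k⟫) :=
    fun k => by
      have := (hl k).ne'
      simp only [a]; field_simp; ring
  have ha : Summable fun k => lam k * a k ^ 2 :=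
    ((((hc.add ((hw.memNegSeq_iotaX hlam0 hlam).mul_left (α ^ 2))).add
      (hv.mul_left (β ^ 2))).add (hw.mul_left (δ ^ 2))).mul_left (4 / γ ^ 2)).of_nonneg_of_le
      (fun k => mul_nonneg (hl k).le (sq_nonneg _)) fun k => mul_sq_le_of_eq (hl k) hγ (hca k)
  obtain ⟨u, hu, hua⟩ := exists_memHalf_inner_eq e hlam0 hlam ha
  exact ⟨u, hu, funext fun k => by rw [mgtThird_apply, hua, hca]⟩

lemma sq_norm_le_mul_sq_norm_mgtThird (hlam0 : 0 < lam0) (hlam : ∀ k, lam0 ≤ lam k)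
    (hγ : γ ≠ 0) {u v w : E} (hu : memHalf e lam u) (hv : memHalf e lam v)
    (hw : memHalf e lam w) :
    nHalfSq e lam u + nHalfSq e lam v + nNegSeqSq lam (iotaX e w) ≤
      (4 / γ ^ 2 * (1 + α ^ 2 * (lam0 ^ 2)⁻¹ + β ^ 2 + δ ^ 2) + 1 + (lam0 ^ 2)⁻¹) *
        (nHalfSq e lam v + nHalfSq e lam w + nNegSeqSq lam (mgtThird e lam α β γ δ u v w)) := by
  have hl : ∀ k, 0 ≤ lam k := fun k => hlam0.le.trans (hlam k)
  set N := nHalfSq e lam v + nHalfSq e lam w + nNegSeqSq lam (mgtThird e lam α β γ δ u v w)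
  have hv₀ := nHalfSq_nonneg e hl v
  have hw₀ := nHalfSq_nonneg e hl w
  have hc₀ := nNegSeqSq_nonneg hl (mgtThird e lam α β γ δ u v w)
  have hvN : nHalfSq e lam v ≤ N := by linarith
  have hwN : nHalfSq e lam w ≤ N := by linarith
  have hcN : nNegSeqSq lam (mgtThird e lam α β γ δ u v w) ≤ N := by linarith
  have hιN : nNegSeqSq lam (iotaX e w) ≤ (lam0 ^ 2)⁻¹ * N :=
    (nNegSeqSq_iotaX_le hlam0 hlam hw).trans (by gcongr)
  have huN :
      nHalfSq e lam u ≤ 4 / γ ^ 2 * (N + α ^ 2 * ((lam0 ^ 2)⁻¹ * N) + β ^ 2 * N + δ ^ 2 * N) :=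
    (nHalfSq_le_of_mgtThird hlam0 hlam hγ hu hv hw).trans (by gcongr)
  linarith

end Extrapolated

theorem zero_in_resolvent_set_extrapolated_general
    (e : HilbertBasis ℕ ℝ X) (lam : ℕ → ℝ) (lam0 : ℝ)
    (hlam0 : 0 < lam0) (hlam : ∀ k, lam0 ≤ lam k)
    (α β γ δ : ℝ) (hγ : 0 < γ) :
    -- injectivity of `𝔸₋` on its domain `X^{1/2} × X^{1/2} × X^{1/2}`
    (∀ u₁ v₁ w₁ u₂ v₂ w₂ : X,
      memHalf e lam u₁ → memHalf e lam v₁ → memHalf e lam w₁ →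
      memHalf e lam u₂ → memHalf e lam v₂ → memHalf e lam w₂ →
      v₁ = v₂ → w₁ = w₂ →
      (-α) • iotaX e w₁ - Aminus e lam (β • v₁ + γ • u₁ + δ • w₁) =
        (-α) • iotaX e w₂ - Aminus e lam (β • v₂ + γ • u₂ + δ • w₂) →
      u₁ = u₂ ∧ v₁ = v₂ ∧ w₁ = w₂) ∧
    -- surjectivity of `𝔸₋` onto `Y₋ = X^{1/2} × X^{1/2} × X^{-1/2}`
    (∀ (p q : X) (c : ℕ → ℝ), memHalf e lam p → memHalf e lam q → memNegSeq lam c →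
      ∃ u v w : X, memHalf e lam u ∧ memHalf e lam v ∧ memHalf e lam w ∧
        v = p ∧ w = q ∧
        (-α) • iotaX e w - Aminus e lam (β • v + γ • u + δ • w) = c) ∧
    -- boundedness of the inverse `𝔸₋⁻¹` on `Y₋`
    (∃ C : ℝ, 0 < C ∧ ∀ u v w : X,
      memHalf e lam u → memHalf e lam v → memHalf e lam w →
      Real.sqrt (nHalfSq e lam u + nHalfSq e lam v + nNegSeqSq lam (iotaX e w)) ≤
        C * Real.sqrt (nHalfSq e lam v + nHalfSq e lam w +
          nNegSeqSq lam ((-α) • iotaX e w - Aminus e lam (β • v + γ • u + δ • w)))) := by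
  refine ⟨?_, ?_, ?_⟩
  · rintro u₁ v w u₂ _ _ - - - - - - rfl rfl h
    exact ⟨mgtThird_left_injective (fun k => (hlam0.trans_le (hlam k)).ne') hγ.ne' v w h,
      rfl, rfl⟩
  · intro p q c hp hq hc
    obtain ⟨u, hu, huc⟩ := exists_memHalf_mgtThird_eq hlam0 hlam hγ.ne' hp hq hc
    exact ⟨u, p, q, hu, hp, hq, rfl, rfl, huc⟩
  · refine ⟨√(4 / γ ^ 2 * (1 + α ^ 2 * (lam0 ^ 2)⁻¹ + β ^ 2 + δ ^ 2) + 1 + (lam0 ^ 2)⁻¹),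
      by positivity, fun u v w hu hv hw => ?_⟩
    rw [← Real.sqrt_mul (by positivity)]
    exact Real.sqrt_le_sqrt (sq_norm_le_mul_sq_norm_mgtThird hlam0 hlam hγ.ne' hu hv hw)

/-- Zero belongs to the resolvent set of the extrapolated
operator: `𝔸₋(u,v,w) = (v, w, -α ι(w) - A₋(βv + γu + δw))`, defined on
`X^{1/2} × X^{1/2} × X^{1/2}`, is a bijection onto
`Y₋ = X^{1/2} × X^{1/2} × X^{-1/2}` whose inverse is bounded:
`‖𝔸₋⁻¹ y‖_{Y₋} ≤ C ‖y‖_{Y₋}` for some `C > 0`. -/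
theorem zero_in_resolvent_set_extrapolated
    (e : HilbertBasis ℕ ℝ X) (lam : ℕ → ℝ) (lam0 : ℝ)
    (hlam0 : 0 < lam0) (hlam : ∀ k, lam0 ≤ lam k)
    (α β γ δ : ℝ) (hα : 0 < α) (hβ : 0 < β) (hγ : 0 < γ) (hδ : 0 < δ) :
    -- injectivity of `𝔸₋` on its domain `X^{1/2} × X^{1/2} × X^{1/2}`
    (∀ u₁ v₁ w₁ u₂ v₂ w₂ : X,
      memHalf e lam u₁ → memHalf e lam v₁ → memHalf e lam w₁ →
      memHalf e lam u₂ → memHalf e lam v₂ → memHalf e lam w₂ →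
      v₁ = v₂ → w₁ = w₂ →
      (-α) • iotaX e w₁ - Aminus e lam (β • v₁ + γ • u₁ + δ • w₁) =
        (-α) • iotaX e w₂ - Aminus e lam (β • v₂ + γ • u₂ + δ • w₂) →
      u₁ = u₂ ∧ v₁ = v₂ ∧ w₁ = w₂) ∧
    -- surjectivity of `𝔸₋` onto `Y₋ = X^{1/2} × X^{1/2} × X^{-1/2}`
    (∀ (p q : X) (c : ℕ → ℝ), memHalf e lam p → memHalf e lam q → memNegSeq lam c →
      ∃ u v w : X, memHalf e lam u ∧ memHalf e lam v ∧ memHalf e lam w ∧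
        v = p ∧ w = q ∧
        (-α) • iotaX e w - Aminus e lam (β • v + γ • u + δ • w) = c) ∧
    -- boundedness of the inverse `𝔸₋⁻¹` on `Y₋`
    (∃ C : ℝ, 0 < C ∧ ∀ u v w : X,
      memHalf e lam u → memHalf e lam v → memHalf e lam w →
      Real.sqrt (nHalfSq e lam u + nHalfSq e lam v + nNegSeqSq lam (iotaX e w)) ≤
        C * Real.sqrt (nHalfSq e lam v + nHalfSq e lam w +
          nNegSeqSq lam ((-α) • iotaX e w - Aminus e lam (β • v + γ • u + δ • w)))) :=
  zero_in_resolvent_set_extrapolated_general e lam lam0 hlam0 hlam α β γ δ hγ
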